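/- Let (μ, P, H) be an admissible triple in ℝ³ whose support is contained in the closed ball {x ∈ ℝ³ : |x| ≤ 1/2} of radius 1/2 centered at the origin. Then ∫ |H|² dμ ≥ (7/4) μ(ℝ³). -/

import Mathlib

open MeasureTheory Metric Filter
open scoped RealInnerProductSpace ENNReal

noncomputable section

/-- Euclidean three-space. -/
abbrev E3 : Type := EuclideanSpace ℝ (Fin 3)

/-- The support of a measure: points all of whose neighbourhoods have positive measure. -/
def mSupport (μ : Measure E3) : Set E3 := {x | ∀ r > 0, 0 < μ (ball x r)}

/-- An admissible triple `(μ, P, H)`: a finite compactly supported Borel measure, a measurable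
family of maps which μ-a.e. are orthogonal projections onto 2-dimensional planes (idempotent,
symmetric, of rank two), and an `L²(μ)` generalized mean curvature `H` satisfying the first
variation identity `∫ trace(P x ∘ DX x) dμ = -2 ∫ ⟨X x, H x⟩ dμ` for every compactly supported
`C¹` vector field `X`. -/
structure IsAdmissible (μ : Measure E3) (P : E3 → E3 →L[ℝ] E3) (H : E3 → E3) : Prop where
  finite : IsFiniteMeasure μ
  compact_support : IsCompact (mSupport μ)
  meas_P : ∀ v : E3, Measurable fun x => P x v
  meas_H : AEStronglyMeasurable H μ
  proj_ae : ∀ᵐ x ∂μ, (P x).comp (P x) = P x ∧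
      (∀ u v : E3, ⟪P x u, v⟫ = ⟪u, P x v⟫) ∧
      Module.finrank ℝ (LinearMap.range ((P x : E3 →ₗ[ℝ] E3))) = 2
  memL2 : MemLp H 2 μ
  first_variation : ∀ X : E3 → E3, ContDiff ℝ 1 X → HasCompactSupport X →
      ∫ x, LinearMap.trace ℝ E3 ((P x).comp (fderiv ℝ X x) : E3 →ₗ[ℝ] E3) ∂μ
        = -2 * ∫ x, ⟪X x, H x⟫ ∂μ

/-- The generalized mean curvature is perpendicular: `(P x) (H x) = 0` for μ-a.e. `x`. -/
def IsPerp (μ : Measure E3) (P : E3 → E3 →L[ℝ] E3) (H : E3 → E3) : Prop :=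
  ∀ᵐ x ∂μ, P x (H x) = 0

/-- The Willmore energy of an admissible triple. -/
def Willmore (μ : Measure E3) (H : E3 → E3) : ℝ := ∫ x, ‖H x‖ ^ 2 ∂μ

/-- The mass of a measure. -/
def Mass (μ : Measure E3) : ℝ := (μ Set.univ).toReal

/-!
Testing the first variation identity with a vector field equal to the position vector `X x = x`
near the support makes the integrand `trace (P x)` equal to `2`, so
`μ(ℝ³) = -∫ ⟨x, H x⟩ dμ`. If the support lies in the ball of radius `R`, then
`-⟨x, H⟩ ≤ R |H| ≤ R² |H|² / 2 + 1 / 2`, whence `μ(ℝ³) ≤ R² W(μ)`; for `R = 1 / 2` this reads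
`W(μ) ≥ 4 μ(ℝ³) ≥ (7 / 4) μ(ℝ³)`.
-/

open Topology

lemma mSupport_eq_support (μ : Measure E3) : mSupport μ = μ.support := by
  ext x
  exact nhds_basis_ball.mem_measureSupport.symm

lemma ae_mem_of_mSupport_subset {μ : Measure E3} {s : Set E3} (h : mSupport μ ⊆ s) :
    ∀ᵐ x ∂μ, x ∈ s :=
  mem_of_superset Measure.support_mem_ae (mSupport_eq_support μ ▸ h)

open scoped ContDiff in
theorem exists_contDiff_hasCompactSupport_eventuallyEq_id {F : Type*} [NormedAddCommGroup F]
    [NormedSpace ℝ F] [FiniteDimensional ℝ F] (r : ℝ) :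
    ∃ X : F → F, ContDiff ℝ ∞ X ∧ HasCompactSupport X ∧
      ∀ x ∈ closedBall (0 : F) r, X =ᶠ[𝓝 x] id := by
  let f : ContDiffBump (0 : F) := ⟨|r| + 1, |r| + 2, by positivity, by linarith⟩
  refine ⟨fun x => f x • x, f.contDiff.smul contDiff_id, f.hasCompactSupport.smul_right,
    fun x hx => ?_⟩
  have hx : x ∈ ball (0 : F) f.rIn :=
    mem_ball.2 <| (mem_closedBall.1 hx).trans_lt <| by simp [f]; linarith [le_abs_self r]
  filter_upwards [f.eventuallyEq_one_of_mem_ball hx] with y hy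
  simp [hy]

lemma neg_inner_le_of_norm_le {F : Type*} [NormedAddCommGroup F] [InnerProductSpace ℝ F]
    {x : F} {R : ℝ} (hx : ‖x‖ ≤ R) (h : F) : -⟪x, h⟫ ≤ R ^ 2 * ‖h‖ ^ 2 / 2 + 1 / 2 := by
  have : -⟪x, h⟫ ≤ R * ‖h‖ :=
    (neg_le_abs _).trans <| (abs_real_inner_le_norm x h).trans <| by gcongr
  nlinarith [sq_nonneg (R * ‖h‖ - 1)]

namespace IsAdmissible

variable {μ : Measure E3} {P : E3 → E3 →L[ℝ] E3} {H : E3 → E3}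

lemma ae_trace_eq_two (hadm : IsAdmissible μ P H) :
    ∀ᵐ x ∂μ, LinearMap.trace ℝ E3 (P x : E3 →ₗ[ℝ] E3) = 2 := by
  filter_upwards [hadm.proj_ae] with x hx
  obtain ⟨hidem, -, hrank⟩ := hx
  have : IsIdempotentElem (P x : E3 →ₗ[ℝ] E3) := congrArg ContinuousLinearMap.toLinearMap hidem
  rw [LinearMap.IsIdempotentElem.isProj_range _ this |>.trace, hrank]
  norm_num

lemma exists_ae_mem_closedBall (hadm : IsAdmissible μ P H) :
    ∃ R, ∀ᵐ x ∂μ, x ∈ closedBall (0 : E3) R := by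
  obtain ⟨R, hR⟩ := hadm.compact_support.isBounded.subset_closedBall 0
  exact ⟨R, ae_mem_of_mSupport_subset hR⟩

lemma integrable_inner_self (hadm : IsAdmissible μ P H) :
    Integrable (fun x => ⟪x, H x⟫) μ := by
  have := hadm.finite
  obtain ⟨R, hR⟩ := hadm.exists_ae_mem_closedBall
  refine (hadm.memL2.integrable one_le_two).norm.const_mul R |>.mono'
    (continuous_id.aestronglyMeasurable.inner hadm.meas_H) ?_
  filter_upwards [hR] with x hx
  calc ‖⟪x, H x⟫‖ ≤ ‖x‖ * ‖H x‖ := norm_inner_le_norm _ _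
    _ ≤ R * ‖H x‖ := by gcongr; simpa using hx

theorem mass_eq_neg_integral_inner_self (hadm : IsAdmissible μ P H) :
    Mass μ = -∫ x, ⟪x, H x⟫ ∂μ := by
  obtain ⟨R, hR⟩ := hadm.exists_ae_mem_closedBall
  obtain ⟨X, hXsmooth, hXcs, hXid⟩ := exists_contDiff_hasCompactSupport_eventuallyEq_id (F := E3) R
  have htrace : ∀ᵐ x ∂μ,
      LinearMap.trace ℝ E3 ((P x).comp (fderiv ℝ X x) : E3 →ₗ[ℝ] E3) = 2 := by
    filter_upwards [hR, hadm.ae_trace_eq_two] with x hx htr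
    rwa [(hXid x hx).fderiv_eq, fderiv_id, ContinuousLinearMap.comp_id]
  have hinner : ∫ x, ⟪X x, H x⟫ ∂μ = ∫ x, ⟪x, H x⟫ ∂μ := by
    refine integral_congr_ae ?_
    filter_upwards [hR] with x hx
    rw [(hXid x hx).eq_of_nhds, id]
  have hfv := hadm.first_variation X (hXsmooth.of_le (by norm_num)) hXcs
  rw [integral_congr_ae htrace, integral_const, hinner, smul_eq_mul] at hfv
  rw [Mass, ← measureReal_def]
  linarith

theorem mass_le_sq_mul_willmore (hadm : IsAdmissible μ P H) {R : ℝ}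
    (hsupp : mSupport μ ⊆ closedBall 0 R) : Mass μ ≤ R ^ 2 * Willmore μ H := by
  have := hadm.finite
  have hH2 : Integrable (fun x => ‖H x‖ ^ 2) μ := hadm.memL2.integrable_norm_pow two_ne_zero
  have hbound : -∫ x, ⟪x, H x⟫ ∂μ ≤ ∫ x, (R ^ 2 * ‖H x‖ ^ 2 / 2 + 1 / 2) ∂μ := by
    rw [← integral_neg]
    refine integral_mono_ae hadm.integrable_inner_self.neg
      ((hH2.const_mul _).div_const _ |>.add (integrable_const _)) ?_
    filter_upwards [ae_mem_of_mSupport_subset hsupp] with x hx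
    exact neg_inner_le_of_norm_le (by simpa using hx) (H x)
  rw [← hadm.mass_eq_neg_integral_inner_self, integral_add ((hH2.const_mul _).div_const _)
    (integrable_const _), integral_div, integral_const_mul, integral_const, smul_eq_mul] at hbound
  rw [Mass, ← measureReal_def] at hbound ⊢
  rw [Willmore]
  linarith

end IsAdmissible

/-- if the support of an admissible triple is contained in the closed ball of
radius `1/2` centered at the origin, then `∫ |H|² dμ ≥ (7/4) μ(ℝ³)`. -/
theorem willmore_vs_area_half_ball (μ : Measure E3) (P : E3 → E3 →L[ℝ] E3) (H : E3 → E3)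
    (hadm : IsAdmissible μ P H) (hsupp : mSupport μ ⊆ closedBall 0 (1 / 2)) :
    (7 / 4 : ℝ) * Mass μ ≤ Willmore μ H := by
  have hmass := hadm.mass_le_sq_mul_willmore hsupp
  have hmass_nonneg : 0 ≤ Mass μ := ENNReal.toReal_nonneg
  linarith

end
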